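/- Let G be a finite simple graph and let c : V(G) → ℝ be a proper vertex coloring of G (adjacent vertices receive different values) whose set of values is linearly independent over the rationals ℚ. Then for every pair of adjacent vertices u and v, Σ_{x ∈ N(u)} c(x) ≠ Σ_{x ∈ N(v)} c(x); in particular, every graph with chromatic number k admits a real-valued coloring with k values under which the neighborhood sums of any two adjacent vertices differ. -/

import Mathlib

/-!
Group the neighborhood sum of `u` by colors: `∑_{x ∈ N(u)} c x = ∑_r #{x ∈ N(u) | c x = r} • r`.
Since the colors are linearly independent, equal neighborhood sums force equal color counts.
For adjacent `u` and `v`, the color `c v` occurs in `N(u)` (at `v`) but not in `N(v)`, because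
`c` is proper. For the second claim, color with `k` reals that are independent over `ℚ`, which
exist because `ℝ` has rank continuum over `ℚ`.
-/

/-- The sum of the values of `f` over the neighborhood of `u` in `G`. -/
noncomputable def nsum {V : Type*} [Fintype V] {M : Type*} [AddCommMonoid M]
    (G : SimpleGraph V) (f : V → M) (u : V) : M :=
  letI := Classical.decRel G.Adj
  ∑ x ∈ G.neighborFinset u, f x

open Finset

section ColorCounts

variable {V R M : Type*} [Semiring R]

noncomputable def colorCount (c : V → M) (s : Finset V) : Set.range c →₀ R :=
  ∑ x ∈ s, Finsupp.single (Set.rangeFactorization c x) 1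

theorem linearCombination_colorCount [AddCommMonoid M] [Module R M] (c : V → M) (s : Finset V) :
    Finsupp.linearCombination R ((↑) : Set.range c → M) (colorCount c s) = ∑ x ∈ s, c x := by
  simp [colorCount, map_sum, Set.rangeFactorization_coe]

theorem colorCount_apply [DecidableEq M] (c : V → M) (s : Finset V) (a : V) :
    colorCount (R := R) c s (Set.rangeFactorization c a) = #{x ∈ s | c x = c a} := by
  simp [colorCount, Finsupp.finsetSum_apply, Finsupp.single_apply, Set.rangeFactorization,
    Subtype.ext_iff]

theorem card_filter_color_eq_of_sum_eq [CharZero R] [AddCommMonoid M] [Module R M]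
    [DecidableEq M] {c : V → M} (hli : LinearIndependent R ((↑) : Set.range c → M))
    {s t : Finset V} (hst : ∑ x ∈ s, c x = ∑ x ∈ t, c x) (a : V) :
    #{x ∈ s | c x = c a} = #{x ∈ t | c x = c a} := by
  have hcount : colorCount (R := R) c s = colorCount c t :=
    hli (by rw [linearCombination_colorCount, linearCombination_colorCount, hst])
  exact_mod_cast (colorCount_apply (R := R) c s a).symm.trans
    ((congrArg (· (Set.rangeFactorization c a)) hcount).trans (colorCount_apply c t a))

end ColorCounts

theorem nsum_eq_sum_neighborFinset {V M : Type*} [Fintype V] [AddCommMonoid M]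
    (G : SimpleGraph V) [DecidableRel G.Adj] (f : V → M) (u : V) :
    nsum G f u = ∑ x ∈ G.neighborFinset u, f x := by
  unfold nsum
  convert rfl

theorem nsum_ne_of_adj {V R M : Type*} [Fintype V] [Semiring R] [CharZero R] [AddCommMonoid M]
    [Module R M] {G : SimpleGraph V} {c : V → M} (hproper : ∀ ⦃u v : V⦄, G.Adj u v → c u ≠ c v)
    (hli : LinearIndependent R ((↑) : Set.range c → M)) ⦃u v : V⦄ (huv : G.Adj u v) :
    nsum G c u ≠ nsum G c v := by
  classical
  intro hsum
  rw [nsum_eq_sum_neighborFinset, nsum_eq_sum_neighborFinset] at hsum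
  have hcount := card_filter_color_eq_of_sum_eq hli hsum v
  have hu : v ∈ ({x ∈ G.neighborFinset u | c x = c v} : Finset V) := by simp [huv]
  have hv : ({x ∈ G.neighborFinset v | c x = c v} : Finset V) = ∅ :=
    filter_eq_empty_iff.mpr fun x hx => (hproper ((G.mem_neighborFinset v x).mp hx)).symm
  rw [hv, card_empty, card_eq_zero] at hcount
  simp [hcount] at hu

theorem exists_linearIndependent_rat_real (n : ℕ) : ∃ g : Fin n → ℝ, LinearIndependent ℚ g :=
  exists_linearIndependent_of_le_rank (Real.rank_rat_real ▸ (Cardinal.nat_lt_continuum n).le)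

theorem SimpleGraph.Colorable.exists_nsum_ne {W : Type*} [Fintype W] {H : SimpleGraph W} {k : ℕ}
    (hk : H.Colorable k) :
    ∃ (d : W → ℝ) (s : Finset ℝ), #s = k ∧ (∀ w, d w ∈ s) ∧
      ∀ ⦃u v : W⦄, H.Adj u v → nsum H d u ≠ nsum H d v := by
  classical
  obtain ⟨C⟩ := hk
  obtain ⟨g, hg⟩ := exists_linearIndependent_rat_real k
  refine ⟨g ∘ C, univ.image g, by simp [card_image_of_injective _ hg.injective],
    fun w => mem_image_of_mem g (mem_univ _), nsum_ne_of_adj (R := ℚ) ?_ ?_⟩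
  · exact fun u v huv h => C.valid huv (hg.injective h)
  · exact hg.linearIndepOn_id.mono (Set.range_comp_subset_range C g)

/-- If `c` is a proper real-valued coloring of a finite simple graph `G` whose set of
values is linearly independent over `ℚ`, then adjacent vertices have different
neighborhood sums under `c`. In particular, every finite graph with chromatic number
`k` admits a real-valued coloring using a palette of `k` values under which the
neighborhood sums of any two adjacent vertices differ. -/
theorem proper_rationally_independent_coloring_is_additive
    {V : Type*} [Fintype V] (G : SimpleGraph V) (c : V → ℝ)
    (hproper : ∀ ⦃u v : V⦄, G.Adj u v → c u ≠ c v)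
    (hli : LinearIndependent ℚ ((↑) : Set.range c → ℝ)) :
    (∀ ⦃u v : V⦄, G.Adj u v → nsum G c u ≠ nsum G c v) ∧
    (∀ (W : Type) [Fintype W] (H : SimpleGraph W) (k : ℕ),
      H.chromaticNumber = k →
      ∃ (d : W → ℝ) (s : Finset ℝ), s.card = k ∧ (∀ w, d w ∈ s) ∧
        ∀ ⦃u v : W⦄, H.Adj u v → nsum H d u ≠ nsum H d v) :=
  ⟨nsum_ne_of_adj hproper hli, fun _ _ H _ hk =>
    (H.chromaticNumber_le_iff_colorable.mp hk.le).exists_nsum_ne⟩
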